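/- arXiv:0709.2908 — 4 statements merged into one kernel-verified Lean document; each statement's English description precedes it below -/
import Mathlib

section
/- Let x₁, …, x₁₂ be elements of a field of characteristic 0. There exist a monic polynomial R of degree 4 and polynomials A₂, A₃ of degrees at most 2 and 3 respectively with ∏ᵢ(X − xᵢ) = R³ + A₂·R + A₃ if and only if the coefficient of X⁻¹ in the Laurent expansion at infinity of (∏ᵢ₌₁¹²(X − xᵢ))^{1/3} vanishes; moreover when they exist, R, A₂, A₃ are unique. -/
/-! Reversing coefficients (`reflect 12`) turns `P = ∏ (X - xᵢ)` into `∏ (1 - xᵢ t)`, whose cube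
root is `S`. For a monic quartic `R` with reversal `r = reflect 4 R`, the condition
`deg (P - R³) ≤ 6` says `S³ ≡ r³ mod t⁶`, which is equivalent to `S ≡ r mod t⁶` because
`S² + S r + r²` has constant term `3`, a unit. Hence such an `R` exists iff the truncation of `S`
below `t⁶` has degree at most 4, i.e. iff the coefficient of `t⁵` in `S` vanishes, and `R` is then
unique; `A₂` and `A₃` are the quotient and remainder of `P - R³` by `R`. -/

open Polynomial

section

variable {A : Type*} [CommRing A]

namespace Polynomial

lemma reflect_X_sub_C (a : A) : reflect 1 (X - C a) = 1 - C a * X := by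
  rw [reflect_sub, ← pow_one X, reflect_monomial, reflect_C, revAt_le le_rfl]
  simp

lemma reflect_prod_X_sub_C {ι : Type*} (s : Finset ι) (a : ι → A) :
    reflect s.card (∏ i ∈ s, (X - C (a i))) = ∏ i ∈ s, (1 - C (a i) * X) := by
  induction s using Finset.cons_induction with
  | empty => simp
  | cons j s hj ih =>
    have hdeg : (∏ i ∈ s, (X - C (a i))).natDegree ≤ s.card :=
      (natDegree_prod_le _ _).trans <| by
        simpa using Finset.sum_le_card_nsmul s _ 1 fun i _ => natDegree_X_sub_C_le (a i)
    rw [Finset.prod_cons, Finset.prod_cons, Finset.card_cons, add_comm,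
      reflect_mul _ _ (natDegree_X_sub_C_le _) hdeg, reflect_X_sub_C, ih]

lemma reflect_pow {f : A[X]} {N : ℕ} (hf : f.natDegree ≤ N) (n : ℕ) :
    reflect (N * n) (f ^ n) = reflect N f ^ n := by
  induction n with
  | zero => simp
  | succ n ih =>
    rw [pow_succ, pow_succ, mul_add, mul_one,
      reflect_mul _ _ ((natDegree_pow_le_of_le n hf).trans_eq (mul_comm _ _)) hf, ih]

lemma natDegree_le_iff_X_pow_dvd_reflect {f : A[X]} {N m : ℕ} (hf : f.natDegree ≤ N)
    (hm : m ≤ N) :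
    f.natDegree ≤ m ↔ X ^ (N - m) ∣ reflect N f := by
  rw [natDegree_le_iff_coeff_eq_zero, X_pow_dvd_iff]
  simp only [coeff_reflect]
  constructor
  · intro h d hd
    rw [revAt_le (by omega)]
    exact h _ (by omega)
  · intro h j hj
    by_cases hjN : j ≤ N
    · simpa [revAt_le (Nat.sub_le N j), Nat.sub_sub_self hjN] using h (N - j) (by omega)
    · exact coeff_eq_zero_of_natDegree_lt (by omega)

lemma Monic.natDegree_le_and_eq_mul_add_iff [Nontrivial A] {R : A[X]} (hR : R.Monic)
    {f a b : A[X]} {k : ℕ} :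
    a.natDegree ≤ k ∧ b.degree < R.degree ∧ f = a * R + b ↔
      f.natDegree ≤ k + R.natDegree ∧ a = f /ₘ R ∧ b = f %ₘ R := by
  constructor
  · rintro ⟨ha, hb, rfl⟩
    obtain ⟨hdiv, hmod⟩ := div_modByMonic_unique (f := a * R + b) a b hR ⟨by ring, hb⟩
    refine ⟨natDegree_add_le_of_degree_le (natDegree_mul_le.trans (by omega))
      ((natDegree_le_natDegree hb.le).trans (by omega)), hdiv.symm, hmod.symm⟩
  · rintro ⟨hf, rfl, rfl⟩
    refine ⟨by rw [natDegree_divByMonic f hR]; omega, degree_modByMonic_lt f hR, ?_⟩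
    linear_combination (modByMonic_add_div f R).symm

end Polynomial

namespace PowerSeries

lemma X_pow_dvd_coe_iff {p : A[X]} {n : ℕ} : (X ^ n : A⟦X⟧) ∣ p ↔ Polynomial.X ^ n ∣ p := by
  simp only [X_pow_dvd_iff, Polynomial.X_pow_dvd_iff, Polynomial.coeff_coe]

lemma X_pow_dvd_pow_sub_pow_iff {a b : A⟦X⟧} {n : ℕ} (hn : IsUnit (n : A))
    (ha : constantCoeff a = 1) (hb : constantCoeff b = 1) (k : ℕ) :
    X ^ k ∣ a ^ n - b ^ n ↔ X ^ k ∣ a - b := by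
  have hunit : IsUnit (∑ i ∈ Finset.range n, a ^ i * b ^ (n - 1 - i)) := by
    simpa [isUnit_iff_constantCoeff, ha, hb] using hn
  rw [← geom_sum₂_mul, hunit.dvd_mul_left]

lemma X_pow_dvd_sub_coe_iff {S : A⟦X⟧} {p : A[X]} {n : ℕ} (hp : p.natDegree < n) :
    X ^ n ∣ S - (p : A⟦X⟧) ↔ trunc n S = p := by
  rw [X_pow_dvd_iff, Polynomial.ext_iff]
  simp only [map_sub, Polynomial.coeff_coe, sub_eq_zero, coeff_trunc]
  constructor
  · intro h j
    split_ifs with hj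
    · exact h j hj
    · exact (coeff_eq_zero_of_natDegree_lt (by omega)).symm
  · intro h j hj
    simpa [hj] using h j

end PowerSeries

open PowerSeries in
lemma natDegree_sub_pow_le_iff_X_pow_dvd_sub_reflect {P R : A[X]} {S : A⟦X⟧} {d n k : ℕ}
    (hn : IsUnit (n : A)) (hS : constantCoeff S = 1)
    (hP : P.natDegree ≤ d * n) (hPS : (reflect (d * n) P : A⟦X⟧) = S ^ n)
    (hR : R.Monic) (hRd : R.natDegree = d) (hk : k ≤ d * n) :
    (P - R ^ n).natDegree ≤ d * n - k ↔ (X : A⟦X⟧) ^ k ∣ S - (reflect d R : A⟦X⟧) := by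
  have hRn : (R ^ n).natDegree ≤ d * n :=
    (natDegree_pow_le_of_le n hRd.le).trans_eq (mul_comm _ _)
  have hr : constantCoeff (reflect d R : A⟦X⟧) = 1 := by
    rw [← coeff_zero_eq_constantCoeff_apply, Polynomial.coeff_coe, coeff_reflect,
      revAt_le (Nat.zero_le d), Nat.sub_zero, ← hRd, hR.coeff_natDegree]
  rw [natDegree_le_iff_X_pow_dvd_reflect ((natDegree_sub_le _ _).trans (max_le hP hRn))
      (Nat.sub_le _ _),
    Nat.sub_sub_self hk, reflect_sub, reflect_pow hRd.le, ← X_pow_dvd_coe_iff,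
    Polynomial.coe_sub, hPS, Polynomial.coe_pow, X_pow_dvd_pow_sub_pow_iff hn hS hr]

open PowerSeries in
lemma existsUnique_monic_X_pow_dvd_sub_reflect_iff [Nontrivial A] {S : A⟦X⟧}
    (hS : constantCoeff S = 1) (d : ℕ) :
    (∃! R : A[X], R.Monic ∧ R.natDegree = d ∧
        (X : A⟦X⟧) ^ (d + 2) ∣ S - (reflect d R : A⟦X⟧)) ↔
      coeff (d + 1) S = 0 := by
  have htrunc : ∀ R : A[X], R.natDegree ≤ d →
      ((X : A⟦X⟧) ^ (d + 2) ∣ S - (reflect d R : A⟦X⟧) ↔ trunc (d + 2) S = reflect d R) :=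
    fun R hR => X_pow_dvd_sub_coe_iff (natDegree_reflect_le.trans_lt (by omega))
  constructor
  · rintro ⟨R, ⟨-, hRd, hdvd⟩, -⟩
    have := congrArg (Polynomial.coeff · (d + 1)) ((htrunc R hRd.le).1 hdvd)
    simpa [coeff_trunc, coeff_reflect, revAt_eq_self_of_lt,
      coeff_eq_zero_of_natDegree_lt (show R.natDegree < d + 1 by omega)] using this
  · intro h
    set t := trunc (d + 2) S
    have ht : t.natDegree ≤ d := natDegree_le_iff_coeff_eq_zero.2 fun j hj => by
      rw [coeff_trunc]
      split_ifs with hj'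
      · rwa [show j = d + 1 by omega]
      · rfl
    have ht0 : t.coeff 0 = 1 := by simp [t, coeff_trunc, hS]
    have hcoeff : (reflect d t).coeff d = 1 := by
      rwa [coeff_reflect, revAt_le le_rfl, Nat.sub_self]
    have hdeg : (reflect d t).natDegree = d :=
      natDegree_eq_of_le_of_coeff_ne_zero (natDegree_reflect_le.trans (max_le le_rfl ht))
        (by rw [hcoeff]; exact one_ne_zero)
    refine ⟨reflect d t, ⟨by rw [Monic, leadingCoeff, hdeg, hcoeff], hdeg, ?_⟩, ?_⟩
    · rw [htrunc _ hdeg.le, reflect_reflect]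
    · rintro R ⟨-, hRd, hdvd⟩
      rw [(htrunc R hRd.le).1 hdvd, reflect_reflect]

lemma existsUnique_cube_add_mul_add_iff [Nontrivial A] (P : A[X]) :
    (∃! RA : A[X] × A[X] × A[X],
        RA.1.Monic ∧ RA.1.degree = 4 ∧ RA.2.1.degree ≤ 2 ∧ RA.2.2.degree ≤ 3 ∧
        P = RA.1 ^ 3 + RA.2.1 * RA.1 + RA.2.2) ↔
      ∃! R : A[X], R.Monic ∧ R.natDegree = 4 ∧ (P - R ^ 3).natDegree ≤ 6 := by
  have hsplit : ∀ R a b : A[X],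
      (R.Monic ∧ R.degree = 4 ∧ a.degree ≤ 2 ∧ b.degree ≤ 3 ∧ P = R ^ 3 + a * R + b) ↔
        (R.Monic ∧ R.natDegree = 4 ∧ (P - R ^ 3).natDegree ≤ 6) ∧
          a = (P - R ^ 3) /ₘ R ∧ b = (P - R ^ 3) %ₘ R := by
    intro R a b
    by_cases hR : R.Monic
    · rw [show R.degree = 4 ↔ R.natDegree = 4 from degree_eq_iff_natDegree_eq hR.ne_zero]
      by_cases hRd : R.natDegree = 4
      · have ha : a.degree ≤ 2 ↔ a.natDegree ≤ 2 := natDegree_le_iff_degree_le.symm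
        have hb : b.degree ≤ 3 ↔ b.degree < R.degree := by
          rw [degree_eq_natDegree hR.ne_zero, hRd]
          exact Order.lt_succ_iff.symm
        have hP : P = R ^ 3 + a * R + b ↔ P - R ^ 3 = a * R + b := by
          rw [sub_eq_iff_eq_add', add_assoc]
        simp only [hR, hRd, true_and]
        rw [ha, hb, hP, hR.natDegree_le_and_eq_mul_add_iff, hRd]
      · simp [hRd]
    · simp [hR]
  simp only [hsplit]
  constructor
  · rintro ⟨⟨R, a, b⟩, ⟨hR, -⟩, huniq⟩
    exact ⟨R, hR, fun R' hR' =>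
      congrArg Prod.fst (huniq (R', (P - R' ^ 3) /ₘ R', (P - R' ^ 3) %ₘ R') ⟨hR', rfl, rfl⟩)⟩
  · rintro ⟨R, hR, huniq⟩
    refine ⟨(R, (P - R ^ 3) /ₘ R, (P - R ^ 3) %ₘ R), ⟨hR, rfl, rfl⟩, ?_⟩
    rintro ⟨R', a', b'⟩ ⟨hR', ha', hb'⟩
    obtain rfl : R' = R := huniq R' hR'
    simp only at ha' hb'
    rw [ha', hb']

end

/-- Mestre's construction: let `x₁, …, x₁₂` lie in a field `K` of characteristic 0, and
let `S` be the formal cube root of `∏ᵢ (X - xᵢ)` at infinity; writing `t = X⁻¹`, `S` is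
the unique power series in `t` with constant term 1 satisfying `S³ = ∏ᵢ (1 - xᵢ t)`, so
that `(∏ᵢ (X - xᵢ))^{1/3} = X⁴ · S(X⁻¹)` and the coefficient of `X⁻¹` therein is the
coefficient of `t⁵` in `S`.  Then there exist a monic quartic `R` and polynomials
`A₂, A₃` of degrees at most 2 and 3 with `∏ᵢ (X - xᵢ) = R³ + A₂·R + A₃` if and only if
that coefficient vanishes; moreover `R, A₂, A₃` are then unique. -/
theorem mestre_cube_root_decomposition (K : Type*) [Field K] [CharZero K]
    (x : Fin 12 → K) (S : PowerSeries K)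
    (hS1 : PowerSeries.constantCoeff S = 1)
    (hS3 : S ^ 3 = ∏ i, (1 - PowerSeries.C (x i) * PowerSeries.X)) :
    (∃! RA : Polynomial K × Polynomial K × Polynomial K,
        RA.1.Monic ∧ RA.1.degree = 4 ∧ RA.2.1.degree ≤ 2 ∧ RA.2.2.degree ≤ 3 ∧
        ∏ i, (X - C (x i)) = RA.1 ^ 3 + RA.2.1 * RA.1 + RA.2.2) ↔
      PowerSeries.coeff 5 S = 0 := by
  set P : K[X] := ∏ i, (X - C (x i))
  have hP : P.natDegree ≤ 12 := by
    simp [P, natDegree_finsetProd_X_sub_C_eq_card]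
  have hPS : (reflect 12 P : PowerSeries K) = S ^ 3 := by
    have hrefl := reflect_prod_X_sub_C Finset.univ x
    rw [Finset.card_univ, Fintype.card_fin] at hrefl
    rw [hrefl, hS3, ← Polynomial.coeToPowerSeries.ringHom_apply, map_prod]
    simp
  have h3 : IsUnit ((3 : ℕ) : K) := isUnit_iff_ne_zero.2 (Nat.cast_ne_zero.2 (by norm_num))
  rw [existsUnique_cube_add_mul_add_iff, ← existsUnique_monic_X_pow_dvd_sub_reflect_iff hS1 4]
  refine existsUnique_congr fun R => and_congr_right fun hR => and_congr_right fun hRd => ?_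
  exact natDegree_sub_pow_le_iff_X_pow_dvd_sub_reflect (d := 4) (n := 3) (k := 6)
    h3 hS1 hP hPS hR hRd (by norm_num)
end

section
/- The coefficient F(x₁,…,x₁₂) of X⁻¹ in the Laurent expansion at infinity of (∏ᵢ₌₁¹²(X − xᵢ))^{1/3} is a homogeneous polynomial of degree 5 in x₁,…,x₁₂ which is invariant under the simultaneous translation xᵢ ↦ xᵢ − ξ for all ξ. -/
/-!
Write `t = X⁻¹`. The simultaneous translation `(xᵢ, X) ↦ (xᵢ + ε, X + ε)` fixes `∏ᵢ (X - xᵢ)` and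
the simultaneous scaling `(xᵢ, X) ↦ (λ xᵢ, λ X)` multiplies it by `λ¹²`. Since `d/dX = -t² d/dt`,
their infinitesimal generators act on `ℚ[x][[t]]` as the derivations
`Δ = ∑ ∂/∂xᵢ - t² d/dt` and `Γ = ∑ xᵢ ∂/∂xᵢ - t d/dt`. Every factor `1 - xᵢ t` is an eigenvector
of both (eigenvalues `-t` and `0`), hence so is the cube root `S` of their product, with a third
of the eigenvalue of the product: `Δ S = -4 t S` and `Γ S = 0`. On the coefficient `F` of `t⁵`
these read `∑ ∂F/∂xᵢ - 4 c₄ = -4 c₄` (translation invariance) and `∑ xᵢ ∂F/∂xᵢ = 5 F`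
(homogeneity of degree 5, by Euler).
-/

namespace Derivation

variable {R B : Type*} [CommSemiring R] [CommSemiring B] [Algebra R B]

theorem map_prod_of_forall_eq_mul {ι : Type*} (δ : Derivation R B B) (s : Finset ι) (f c : ι → B)
    (h : ∀ i ∈ s, δ (f i) = c i * f i) :
    δ (∏ i ∈ s, f i) = (∑ i ∈ s, c i) * ∏ i ∈ s, f i := by
  classical
  induction s using Finset.induction_on with
  | empty => simp
  | insert a s ha ih =>
    rw [Finset.prod_insert ha, Finset.sum_insert ha, leibniz, smul_eq_mul, smul_eq_mul,
      ih fun i hi => h i (Finset.mem_insert_of_mem hi), h a (Finset.mem_insert_self a s)]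
    ring

theorem nsmul_apply_of_pow_eq_prod [IsDomain B] {ι : Type*} (δ : Derivation R B B) {S : B}
    (hS : S ≠ 0) {m : ℕ} (hm : m ≠ 0) (s : Finset ι) (f c : ι → B)
    (hSm : S ^ m = ∏ i ∈ s, f i) (h : ∀ i ∈ s, δ (f i) = c i * f i) :
    m • δ S = (∑ i ∈ s, c i) * S := by
  obtain ⟨k, rfl⟩ := Nat.exists_eq_add_one_of_ne_zero hm
  refine mul_left_cancel₀ (pow_ne_zero k hS) ?_
  have := δ.leibniz_pow S (k + 1)
  rw [hSm, δ.map_prod_of_forall_eq_mul s f c h, ← hSm, Nat.add_sub_cancel, smul_comm,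
    smul_eq_mul] at this
  rw [← this]
  ring

end Derivation

namespace PowerSeries

variable {R A : Type*} [CommSemiring R] [CommSemiring A] [Algebra R A]

noncomputable def _root_.Derivation.mapPowerSeries (D : Derivation R A A) :
    Derivation R A⟦X⟧ A⟦X⟧ where
  toFun f := mk fun n => D (coeff n f)
  map_add' f g := by ext n; simp
  map_smul' c f := by ext n; simp
  map_one_eq_zero' := by
    ext n
    simp only [LinearMap.coe_mk, AddHom.coe_mk, coeff_mk, coeff_one]
    split_ifs <;> simp
  leibniz' f g := by
    ext n
    simp only [LinearMap.coe_mk, AddHom.coe_mk, smul_eq_mul, map_add, coeff_mk, coeff_mul,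
      map_sum, Derivation.leibniz, Finset.sum_add_distrib]
    congr 1
    rw [← Finset.Nat.sum_antidiagonal_swap]
    simp only [Prod.fst_swap, Prod.snd_swap]

@[simp]
theorem coeff_mapPowerSeries (D : Derivation R A A) (f : A⟦X⟧) (n : ℕ) :
    coeff n (D.mapPowerSeries f) = D (coeff n f) :=
  coeff_mk n fun k => D (coeff k f)

@[simp]
theorem mapPowerSeries_C (D : Derivation R A A) (a : A) :
    D.mapPowerSeries (C a) = C (D a) := by
  ext n
  simp only [coeff_mapPowerSeries, coeff_C]
  split_ifs <;> simp

@[simp]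
theorem mapPowerSeries_X (D : Derivation R A A) : D.mapPowerSeries (X : A⟦X⟧) = 0 := by
  ext n
  simp only [coeff_mapPowerSeries, coeff_X, map_zero]
  split_ifs <;> simp

theorem coeff_X_mul_derivative (f : A⟦X⟧) (n : ℕ) :
    coeff n (X * d⁄dX A f) = n * coeff n f := by
  cases n with
  | zero => simp
  | succ n => rw [coeff_succ_X_mul, coeff_derivative, mul_comm]; push_cast; ring

end PowerSeries

namespace MvPolynomial

variable (R σ : Type*) [CommSemiring R]

noncomputable def eulerDerivation : Derivation R (MvPolynomial σ R) (MvPolynomial σ R) :=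
  mkDerivation R X

noncomputable def translationDerivation : Derivation R (MvPolynomial σ R) (MvPolynomial σ R) :=
  mkDerivation R 1

variable {R σ}

@[simp]
theorem eulerDerivation_X (i : σ) : eulerDerivation R σ (X i) = X i :=
  mkDerivation_X R _ i

@[simp]
theorem translationDerivation_X (i : σ) : translationDerivation R σ (X i) = 1 :=
  mkDerivation_X R _ i

theorem eulerDerivation_monomial (u : σ →₀ ℕ) (a : R) :
    eulerDerivation R σ (monomial u a) = u.degree • monomial u a := by
  rw [eulerDerivation, mkDerivation_monomial, Finsupp.degree_apply, Finset.sum_smul, Finsupp.sum,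
    Finset.smul_sum]
  refine Finset.sum_congr rfl fun i hi => ?_
  have hi : Finsupp.single i 1 ≤ u :=
    Finsupp.single_le_iff.mpr (Nat.one_le_iff_ne_zero.mpr (Finsupp.mem_support_iff.mp hi))
  rw [X, smul_eq_mul, monomial_mul, tsub_add_cancel_of_le hi, smul_monomial, smul_monomial]
  simp [mul_comm]

theorem coeff_eulerDerivation (p : MvPolynomial σ R) (d : σ →₀ ℕ) :
    coeff d (eulerDerivation R σ p) = d.degree • coeff d p := by
  classical
  induction p using MvPolynomial.induction_on' with
  | monomial u a =>
    rw [eulerDerivation_monomial, coeff_smul, coeff_monomial]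
    split_ifs with h <;> simp [h]
  | add p q hp hq => rw [map_add, coeff_add, coeff_add, hp, hq, smul_add]

theorem isHomogeneous_of_eulerDerivation_eq {R : Type*} [CommRing R] [IsDomain R] [CharZero R]
    {p : MvPolynomial σ R} {n : ℕ} (h : eulerDerivation R σ p = n • p) : p.IsHomogeneous n := by
  intro d hd
  have hc := congrArg (coeff d) h
  rw [coeff_eulerDerivation, coeff_smul, nsmul_eq_mul, nsmul_eq_mul] at hc
  have hdeg : d.degree = n := by exact_mod_cast mul_right_cancel₀ hd hc
  rw [← hdeg, Finsupp.degree_eq_weight_one]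
  rfl

theorem derivative_aeval_of_derivative_eq (g : σ → MvPolynomial σ R) (f : σ → Polynomial R)
    (hf : ∀ i, Polynomial.derivative (f i) = aeval f (g i)) (p : MvPolynomial σ R) :
    Polynomial.derivative (aeval f p) = aeval f (mkDerivation R g p) := by
  induction p using MvPolynomial.induction_on with
  | C a => simp
  | add p q hp hq => simp only [map_add, hp, hq]
  | mul_X p i ih =>
    rw [map_mul, aeval_X, Polynomial.derivative_mul, ih, hf, Derivation.leibniz, mkDerivation_X]
    simp only [smul_eq_mul, map_add, map_mul, aeval_X]
    ring

theorem eval_add_const_of_translationDerivation_eq_zero [IsAddTorsionFree R]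
    {p : MvPolynomial σ R} (h : translationDerivation R σ p = 0) (v : σ → R) (c : R) :
    eval (fun i => v i + c) p = eval v p := by
  set q := aeval (fun i => Polynomial.C (v i) + Polynomial.X) p
  have hq : Polynomial.derivative q = 0 := by
    rw [derivative_aeval_of_derivative_eq 1 _ (by simp), ← translationDerivation, h, map_zero]
  have hq_eval (c : R) : q.eval c = eval (fun i => v i + c) p := by
    rw [← Polynomial.coe_aeval_eq_eval, ← AlgHom.comp_apply, comp_aeval]
    simp [add_comm]
  calc eval (fun i => v i + c) p = q.eval c := (hq_eval c).symm
    _ = q.eval 0 := by rw [Polynomial.eq_C_of_derivative_eq_zero hq]; simp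
    _ = eval v p := by simp [hq_eval]

end MvPolynomial

section Simultaneous

open PowerSeries
open MvPolynomial (eulerDerivation translationDerivation)

variable (R σ : Type*) [CommRing R]

noncomputable def simultaneousTranslationDerivation :
    Derivation R (MvPolynomial σ R)⟦X⟧ (MvPolynomial σ R)⟦X⟧ :=
  (translationDerivation R σ).mapPowerSeries -
    (X ^ 2 : (MvPolynomial σ R)⟦X⟧) • (d⁄dX (MvPolynomial σ R)).restrictScalars R

noncomputable def simultaneousEulerDerivation :
    Derivation R (MvPolynomial σ R)⟦X⟧ (MvPolynomial σ R)⟦X⟧ :=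
  (eulerDerivation R σ).mapPowerSeries -
    (X : (MvPolynomial σ R)⟦X⟧) • (d⁄dX (MvPolynomial σ R)).restrictScalars R

variable {R σ}

theorem simultaneousTranslationDerivation_one_sub_C_X_mul_X (i : σ) :
    simultaneousTranslationDerivation R σ (1 - C (MvPolynomial.X i) * X) =
      -X * (1 - C (MvPolynomial.X i) * X) := by
  simp [simultaneousTranslationDerivation]
  ring

theorem simultaneousEulerDerivation_one_sub_C_X_mul_X (i : σ) :
    simultaneousEulerDerivation R σ (1 - C (MvPolynomial.X i) * X) = 0 := by
  simp [simultaneousEulerDerivation]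

theorem coeff_succ_simultaneousTranslationDerivation (f : (MvPolynomial σ R)⟦X⟧) (n : ℕ) :
    coeff (n + 1) (simultaneousTranslationDerivation R σ f) =
      translationDerivation R σ (coeff (n + 1) f) - n * coeff n f := by
  rw [simultaneousTranslationDerivation, Derivation.sub_apply, Derivation.smul_apply, map_sub,
    coeff_mapPowerSeries, smul_eq_mul, Derivation.restrictScalars_apply, pow_two, mul_assoc,
    coeff_succ_X_mul, coeff_X_mul_derivative]

theorem coeff_simultaneousEulerDerivation (f : (MvPolynomial σ R)⟦X⟧) (n : ℕ) :
    coeff n (simultaneousEulerDerivation R σ f) =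
      eulerDerivation R σ (coeff n f) - n * coeff n f := by
  rw [simultaneousEulerDerivation, Derivation.sub_apply, Derivation.smul_apply, map_sub,
    coeff_mapPowerSeries, smul_eq_mul, Derivation.restrictScalars_apply, coeff_X_mul_derivative]

section Root

variable [IsDomain R] [Fintype σ] {m : ℕ} {S : (MvPolynomial σ R)⟦X⟧}

theorem eulerDerivation_coeff_of_pow_eq_prod [CharZero R] (hS : S ≠ 0) (hm : m ≠ 0)
    (hSm : S ^ m = ∏ i, (1 - C (MvPolynomial.X i) * X)) (n : ℕ) :
    eulerDerivation R σ (coeff n S) = n • coeff n S := by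
  have hΓ := (simultaneousEulerDerivation R σ).nsmul_apply_of_pow_eq_prod hS hm _ _
    (fun _ => 0) hSm fun i _ => by rw [simultaneousEulerDerivation_one_sub_C_X_mul_X, zero_mul]
  have := congrArg (coeff n) hΓ
  rw [map_nsmul, coeff_simultaneousEulerDerivation, Finset.sum_const_zero, zero_mul, map_zero,
    smul_eq_zero] at this
  rw [nsmul_eq_mul]
  exact sub_eq_zero.mp (this.resolve_left hm)

theorem translationDerivation_coeff_succ_of_pow_eq_prod (hS : S ≠ 0) (hm : m ≠ 0)
    (hSm : S ^ m = ∏ i, (1 - C (MvPolynomial.X i) * X)) (n : ℕ) :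
    m * translationDerivation R σ (coeff (n + 1) S) = (m * n - Fintype.card σ) * coeff n S := by
  have hΔ := (simultaneousTranslationDerivation R σ).nsmul_apply_of_pow_eq_prod hS hm _ _
    (fun _ => -X) hSm fun i _ => simultaneousTranslationDerivation_one_sub_C_X_mul_X i
  have := congrArg (coeff (n + 1)) hΔ
  rw [map_nsmul, coeff_succ_simultaneousTranslationDerivation, Finset.sum_const, Finset.card_univ,
    smul_neg, neg_mul, smul_mul_assoc, map_neg, map_nsmul, coeff_succ_X_mul] at this
  simp only [nsmul_eq_mul] at this
  linear_combination this

end Root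

end Simultaneous

/-- Mestre's quintic: work over the polynomial ring `ℚ[x₁,…,x₁₂]` and let `S` be the
formal cube root (in the variable `t = X⁻¹`, with constant term 1) of
`∏ᵢ (1 - xᵢ t)`, so that `(∏ᵢ (X - xᵢ))^{1/3} = X⁴ S(X⁻¹)`.  Then the coefficient
`F = F(x₁,…,x₁₂)` of `X⁻¹` (i.e. of `t⁵` in `S`) is a homogeneous polynomial of
degree 5 in `x₁,…,x₁₂`, invariant under simultaneous translation `xᵢ ↦ xᵢ - ξ`. -/
theorem mestre_quintic_homogeneous_translation_invariant
    (S : PowerSeries (MvPolynomial (Fin 12) ℚ))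
    (hS1 : PowerSeries.constantCoeff S = 1)
    (hS3 : S ^ 3 = ∏ i, (1 - PowerSeries.C (MvPolynomial.X i) * PowerSeries.X)) :
    (PowerSeries.coeff 5 S).IsHomogeneous 5 ∧
      ∀ (v : Fin 12 → ℚ) (ξ : ℚ),
        MvPolynomial.eval (fun i => v i - ξ) (PowerSeries.coeff 5 S) =
          MvPolynomial.eval v (PowerSeries.coeff 5 S) := by
  have hS : S ≠ 0 := fun h => by simp [h] at hS1
  refine ⟨MvPolynomial.isHomogeneous_of_eulerDerivation_eq
    (eulerDerivation_coeff_of_pow_eq_prod hS three_ne_zero hS3 5), fun v ξ => ?_⟩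
  have hF : MvPolynomial.translationDerivation ℚ (Fin 12) (PowerSeries.coeff 5 S) = 0 := by
    have := translationDerivation_coeff_succ_of_pow_eq_prod hS three_ne_zero hS3 4
    norm_num at this
    exact this
  simpa [sub_eq_add_neg] using
    MvPolynomial.eval_add_const_of_translationDerivation_eq_zero hF v (-ξ)
end

section
/- Mestre's quintic F(x₁,…,x₁₂) vanishes on the linear subspace cut out by the six equations xᵢ + x₆₊ᵢ = 0 for 1 ≤ i ≤ 6. -/
/-!
The substitution `t ↦ -t` negates every `xᵢ` in `∏ᵢ (1 - xᵢ t)`, and on the subspace this only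
permutes the factors (`xᵢ₊₆ = -xᵢ`), so the product is even. Cube roots with constant term `1`
are unique, so `S(-t) = S(t)` and the odd coefficients of `S` vanish.
-/

open Finset PowerSeries

namespace PowerSeries

section CommSemiring

variable {R : Type*} [CommSemiring R]

theorem constantCoeff_rescale (a : R) (f : R⟦X⟧) : constantCoeff (rescale a f) = constantCoeff f := by
  rw [← coeff_zero_eq_constantCoeff_apply, coeff_rescale, pow_zero, one_mul,
    coeff_zero_eq_constantCoeff_apply]

theorem rescale_C (a b : R) : rescale a (C b) = C b := by
  ext (_ | n) <;> simp [coeff_rescale, coeff_C]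

end CommSemiring

variable {R : Type*} [CommRing R]

theorem eq_of_pow_eq_pow_of_constantCoeff_eq_one [NoZeroDivisors R] {n : ℕ} (hn : (n : R) ≠ 0)
    {S T : R⟦X⟧} (hS : constantCoeff S = 1) (hT : constantCoeff T = 1) (h : S ^ n = T ^ n) :
    S = T := by
  set G := ∑ i ∈ range n, S ^ i * T ^ (n - 1 - i)
  have hG : G ≠ 0 := fun hG0 => hn <| by
    simpa [G, hS, hT] using congrArg constantCoeff hG0
  have hfactor : G * (S - T) = 0 := by
    rw [(Commute.all S T).geom_sum₂_mul, h, sub_self]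
  exact sub_eq_zero.mp ((mul_eq_zero.mp hfactor).resolve_left hG)

theorem rescale_neg_one_one_sub_C_mul_X (a : R) :
    rescale (-1 : R) (1 - C a * X) = 1 - C (-a) * X := by
  rw [map_sub, map_one, map_mul, rescale_neg_one_X, rescale_C, map_neg, mul_neg, neg_mul]

theorem rescale_neg_one_prod_one_sub_C_mul_X {ι : Type*} [Fintype ι] (x : ι → R)
    (σ : Equiv.Perm ι) (hσ : ∀ i, x (σ i) = -x i) :
    rescale (-1 : R) (∏ i, (1 - C (x i) * X)) = ∏ i, (1 - C (x i) * X) := by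
  simp only [map_prod, rescale_neg_one_one_sub_C_mul_X, ← hσ]
  exact Equiv.prod_comp σ fun i => 1 - C (x i) * X

theorem coeff_eq_zero_of_rescale_neg_one_eq_self [NoZeroDivisors R] [CharZero R] {f : R⟦X⟧}
    (hf : rescale (-1 : R) f = f) {n : ℕ} (hn : Odd n) : coeff n f = 0 := by
  have := congrArg (coeff n) hf
  rwa [coeff_rescale, hn.neg_one_pow, neg_one_mul, CharZero.neg_eq_self_iff] at this

end PowerSeries

/-- Mestre's quintic `F(x₁,…,x₁₂)` (the coefficient of `X⁻¹` in the expansion at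
infinity of `(∏ᵢ (X - xᵢ))^{1/3}`, realized here pointwise: `S` is the power
series in `t = X⁻¹` with constant term 1 and `S³ = ∏ᵢ (1 - xᵢ t)`, and
`F(x) = coeff₅ S`) vanishes on the linear subspace cut out by the equations
`xᵢ + x₆₊ᵢ = 0` for `1 ≤ i ≤ 6`. -/
theorem mestre_quintic_vanishes_on_antisymmetric_subspace
    (x : Fin 12 → ℚ)
    (hx : ∀ i : Fin 6, x ⟨i, by omega⟩ + x ⟨i + 6, by omega⟩ = 0)
    (S : PowerSeries ℚ)
    (hS1 : PowerSeries.constantCoeff S = 1)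
    (hS3 : S ^ 3 = ∏ i, (1 - PowerSeries.C (x i) * PowerSeries.X)) :
    PowerSeries.coeff 5 S = 0 := by
  have hshift : ∀ j : Fin 12, x (j + 6) = -x j := by
    intro j
    have hj := hx ⟨j % 6, by omega⟩
    fin_cases j <;> simp at hj ⊢ <;> linarith
  have hprod := rescale_neg_one_prod_one_sub_C_mul_X x (Equiv.addRight 6) hshift
  have hS_even : rescale (-1 : ℚ) S = S :=
    eq_of_pow_eq_pow_of_constantCoeff_eq_one (n := 3) (by norm_num)
      (by rw [constantCoeff_rescale, hS1]) hS1 (by rw [← map_pow, hS3, hprod])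
  exact coeff_eq_zero_of_rescale_neg_one_eq_self hS_even (by decide)
end

section
/- The elliptic curve w² = 16s³ − 19s² + 88s − 48 over ℚ has the rational point (s, w) = (4, 32), and this point has infinite order. -/
/-!
Write `P = (64, 512)` on the model `y² = x³ - 19x² + 1408x - 12288`. The coefficients are
`2`-adically integral, and on such a curve (with `a₁ = a₃ = 0`) doubling a point with
`|x|₂ > 1` multiplies `|x|₂` by `4`: the tangent slope `ℓ` satisfies `|ℓ|₂² = 4|x|₂`, which
dominates the remaining terms of `x(2Q) = ℓ² - a₂ - 2x`. The first multiple of `P` whose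
`x`-coordinate is not `2`-integral is `12P`, with `|x|₂ = 2¹⁰`, so its multiples `2ᵏ • 12P` are
pairwise distinct; hence `12P`, and with it `P`, has infinite order.
-/

open WeierstrassCurve

theorem not_isOfFinAddOrder_of_injective_nsmul_comp {G : Type*} [AddMonoid G] {a : G}
    {n : ℕ → ℕ} (hn : Function.Injective fun k => n k • a) : ¬IsOfFinAddOrder a := fun ha =>
  Set.infinite_range_of_injective hn <| ha.finite_multiples.subset <| by
    rw [AddSubmonoid.coe_multiples]
    exact Set.range_comp_subset_range n (· • a)

namespace AbsoluteValue

variable {K S : Type*} [Field K] [Field S] [LinearOrder S] [IsStrictOrderedRing S]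
  {v : AbsoluteValue K S}

lemma apply_mul_le_of_apply_le_one {a : K} (ha : v a ≤ 1) (b : K) : v (a * b) ≤ v b := by
  rw [map_mul]
  exact mul_le_of_le_one_left (v.nonneg b) ha

lemma apply_three_eq_one (hv : IsNonarchimedean v) (hv2 : v 2 < 1) : v 3 = 1 := by
  have : v 2 < v 1 := by rwa [map_one]
  rw [show (3 : K) = 1 + 2 by norm_num, hv.add_eq_left_of_lt this, map_one]

end AbsoluteValue

namespace Rat.AbsoluteValue

variable (p : ℕ) [Fact p.Prime]

lemma isNonarchimedean_padic : IsNonarchimedean (padic p) := fun q r => by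
  simp only [padic_eq_padicNorm]
  exact_mod_cast padicNorm.nonarchimedean

lemma padic_natCast_self : padic p p = (p : ℝ)⁻¹ := by
  rw [padic_eq_padicNorm, padicNorm.padicNorm_p_of_prime]
  push_cast
  rfl

lemma padic_intCast_of_not_dvd {n : ℤ} (hn : ¬(p : ℤ) ∣ n) : padic p n = 1 := by
  rw [padic_eq_padicNorm, (padicNorm.int_eq_one_iff n).mpr hn, Rat.cast_one]

end Rat.AbsoluteValue

namespace WeierstrassCurve

variable {K S : Type*} [Field K] [Field S] [LinearOrder S] [IsStrictOrderedRing S]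

structure HasIntegralCoeffs (v : AbsoluteValue K S) (W : WeierstrassCurve K) : Prop where
  a₁_le_one : v W.a₁ ≤ 1
  a₂_le_one : v W.a₂ ≤ 1
  a₃_le_one : v W.a₃ ≤ 1
  a₄_le_one : v W.a₄ ≤ 1
  a₆_le_one : v W.a₆ ≤ 1

variable {v : AbsoluteValue K S} {W : WeierstrassCurve K} [W.IsCharNeTwoNF] {x y : K}

lemma abv_Y_sq_eq_abv_X_cube (hv : IsNonarchimedean v) (hW : W.HasIntegralCoeffs v)
    (h : W.toAffine.Equation x y) (hx : 1 < v x) : v y ^ 2 = v x ^ 3 := by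
  have heq : y ^ 2 = x ^ 3 + (W.a₂ * x ^ 2 + W.a₄ * x + W.a₆) := by
    rw [Affine.equation_iff, a₁_of_isCharNeTwoNF, a₃_of_isCharNeTwoNF] at h
    linear_combination h
  have hx12 : v x ≤ v (x ^ 2) := by
    rw [map_pow]
    exact le_self_pow₀ hx.le two_ne_zero
  have hx23 : v (x ^ 2) < v (x ^ 3) := by
    rw [map_pow, map_pow]
    exact pow_lt_pow_right₀ hx (by norm_num)
  have hrest : v (W.a₂ * x ^ 2 + W.a₄ * x + W.a₆) < v (x ^ 3) := by
    refine lt_of_le_of_lt ?_ hx23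
    refine (hv _ _).trans (max_le ((hv _ _).trans (max_le ?_ ?_)) ?_)
    · exact v.apply_mul_le_of_apply_le_one hW.a₂_le_one _
    · exact (v.apply_mul_le_of_apply_le_one hW.a₄_le_one x).trans hx12
    · exact hW.a₆_le_one.trans (hx.le.trans hx12)
  rw [← map_pow, heq, hv.add_eq_left_of_lt hrest, map_pow]

lemma Y_ne_negY_of_one_lt_abv (hv : IsNonarchimedean v) (h2 : (2 : K) ≠ 0)
    (hW : W.HasIntegralCoeffs v) (h : W.toAffine.Equation x y) (hx : 1 < v x) :
    y ≠ W.toAffine.negY x y := by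
  have hy : y ≠ 0 := by
    rintro rfl
    have := abv_Y_sq_eq_abv_X_cube hv hW h hx
    rw [map_zero, zero_pow two_ne_zero] at this
    exact (pow_pos (zero_lt_one.trans hx) 3).ne this
  rw [Affine.negY, a₁_of_isCharNeTwoNF, a₃_of_isCharNeTwoNF]
  intro hneg
  exact mul_ne_zero h2 hy (by linear_combination hneg)

lemma abv_two_sq_mul_abv_addX_self [DecidableEq K] (hv : IsNonarchimedean v)
    (h2 : (2 : K) ≠ 0) (hv2 : v 2 < 1) (hW : W.HasIntegralCoeffs v)
    (h : W.toAffine.Equation x y) (hx : 1 < v x) :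
    v 2 ^ 2 * v (W.toAffine.addX x x (W.toAffine.slope x x y y)) = v x := by
  have hyY := Y_ne_negY_of_one_lt_abv hv h2 hW h hx
  have hy0 : y ≠ 0 := by
    rintro rfl
    simp [Affine.negY, a₁_of_isCharNeTwoNF, a₃_of_isCharNeTwoNF] at hyY
  have hxx2 : v x < v x ^ 2 := lt_self_pow₀ hx one_lt_two
  have hℓ : W.toAffine.slope x x y y * (2 * y) = 3 * x ^ 2 + (2 * W.a₂ * x + W.a₄) := by
    have hden : y - W.toAffine.negY x y = 2 * y := by
      rw [Affine.negY, a₁_of_isCharNeTwoNF, a₃_of_isCharNeTwoNF]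
      ring
    rw [Affine.slope_of_Y_ne rfl hyY, hden, div_mul_cancel₀ _ (mul_ne_zero h2 hy0),
      a₁_of_isCharNeTwoNF]
    ring
  set ℓ := W.toAffine.slope x x y y
  have hnum : v (3 * x ^ 2 + (2 * W.a₂ * x + W.a₄)) = v x ^ 2 := by
    have hlead : v (3 * x ^ 2) = v x ^ 2 := by
      rw [map_mul, v.apply_three_eq_one hv hv2, one_mul, map_pow]
    have h2a₂ : v (2 * W.a₂) ≤ 1 := by
      rw [map_mul]
      exact mul_le_one₀ hv2.le (v.nonneg _) hW.a₂_le_one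
    have hrest : v (2 * W.a₂ * x + W.a₄) < v (3 * x ^ 2) := by
      rw [hlead]
      refine lt_of_le_of_lt ((hv _ _).trans (max_le ?_ ?_)) hxx2
      · exact v.apply_mul_le_of_apply_le_one h2a₂ x
      · exact hW.a₄_le_one.trans hx.le
    rw [hv.add_eq_left_of_lt hrest, hlead]
  have hℓ2 : v 2 ^ 2 * v ℓ ^ 2 = v x := by
    have := congrArg (fun t => v t ^ 2) hℓ
    simp only [map_mul, hnum, mul_pow, abv_Y_sq_eq_abv_X_cube hv hW h hx] at this
    apply mul_right_cancel₀ (pow_ne_zero 3 (zero_lt_one.trans hx).ne')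
    linear_combination this
  have haddX : W.toAffine.addX x x ℓ = ℓ ^ 2 + -(W.a₂ + 2 * x) := by
    rw [Affine.addX, a₁_of_isCharNeTwoNF]
    ring
  have hxℓ : v x < v (ℓ ^ 2) := by
    rw [map_pow, ← hℓ2]
    refine mul_lt_of_lt_one_left (pow_pos (v.pos fun hℓ0 => ?_) 2)
      (pow_lt_one₀ (v.nonneg 2) hv2 two_ne_zero)
    rw [hℓ0, map_zero, zero_pow two_ne_zero, mul_zero] at hℓ2
    linarith
  have hrest : v (-(W.a₂ + 2 * x)) < v (ℓ ^ 2) := by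
    rw [map_neg_eq_map]
    refine lt_of_le_of_lt ((hv _ _).trans (max_le (hW.a₂_le_one.trans hx.le) ?_)) hxℓ
    rw [map_mul]
    exact mul_le_of_le_one_left (v.nonneg x) hv2.le
  rw [haddX, hv.add_eq_left_of_lt hrest, map_pow, hℓ2]

lemma exists_two_pow_nsmul_some_eq [DecidableEq K] (hv : IsNonarchimedean v)
    (h2 : (2 : K) ≠ 0) (hv2 : v 2 < 1) (hW : W.HasIntegralCoeffs v)
    (h : W.toAffine.Nonsingular x y) (hx : 1 < v x) (k : ℕ) :
    ∃ (x' y' : K) (h' : W.toAffine.Nonsingular x' y'),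
      2 ^ k • Affine.Point.some x y h = .some x' y' h' ∧ v 2 ^ (2 * k) * v x' = v x := by
  induction k with
  | zero => exact ⟨x, y, h, one_nsmul _, by simp⟩
  | succ k ih =>
    obtain ⟨x', y', h', hP, hvx'⟩ := ih
    have hx' : 1 < v x' := hx.trans_le <| hvx' ▸
      mul_le_of_le_one_left (v.nonneg x') (pow_le_one₀ (v.nonneg 2) hv2.le)
    have hyY := Y_ne_negY_of_one_lt_abv hv h2 hW h'.left hx'
    refine ⟨_, _, Affine.nonsingular_add h' h' fun hxy => hyY hxy.2, ?_, ?_⟩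
    · rw [pow_succ, mul_nsmul, two_nsmul, hP, Affine.Point.add_self_of_Y_ne hyY]
    · rw [mul_add, pow_add, mul_assoc, abv_two_sq_mul_abv_addX_self hv h2 hv2 hW h'.left hx',
        hvx']

theorem not_isOfFinAddOrder_some_of_one_lt_abv [DecidableEq K] (hv : IsNonarchimedean v)
    (h2 : (2 : K) ≠ 0) (hv2 : v 2 < 1) (hW : W.HasIntegralCoeffs v)
    (h : W.toAffine.Nonsingular x y) (hx : 1 < v x) :
    ¬IsOfFinAddOrder (Affine.Point.some x y h) := by
  refine not_isOfFinAddOrder_of_injective_nsmul_comp (n := (2 ^ ·)) fun k l hkl => ?_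
  obtain ⟨xk, yk, hk, hPk, hvk⟩ := exists_two_pow_nsmul_some_eq hv h2 hv2 hW h hx k
  obtain ⟨xl, yl, hl, hPl, hvl⟩ := exists_two_pow_nsmul_some_eq hv h2 hv2 hW h hx l
  obtain ⟨rfl, -⟩ : xk = xl ∧ yk = yl := by
    simpa only [Affine.Point.some.injEq] using hPk.symm.trans (hkl.trans hPl)
  have hxk : v xk ≠ 0 := fun h0 => by
    rw [h0, mul_zero] at hvk
    linarith
  have hpow := mul_right_cancel₀ hxk (hvk.trans hvl.symm)
  have hkl' : 2 * k = 2 * l := pow_right_injective₀ (v.pos h2) hv2.ne hpow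
  omega

end WeierstrassCurve

namespace WeierstrassCurve.Affine.Point

variable {F : Type*} [Field F] [DecidableEq F] {W : Affine F}

lemma some_add_some_eq {x₁ y₁ x₂ y₂ x₃ y₃ : F} {h₁ : W.Nonsingular x₁ y₁}
    {h₂ : W.Nonsingular x₂ y₂} (h₃ : W.Nonsingular x₃ y₃)
    (hxy : ¬(x₁ = x₂ ∧ y₁ = W.negY x₂ y₂))
    (hx : W.addX x₁ x₂ (W.slope x₁ x₂ y₁ y₂) = x₃)
    (hy : W.addY x₁ x₂ y₁ (W.slope x₁ x₂ y₁ y₂) = y₃) :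
    some x₁ y₁ h₁ + some x₂ y₂ h₂ = some x₃ y₃ h₃ := by
  rw [add_some hxy, some.injEq]
  exact ⟨hx, hy⟩

end WeierstrassCurve.Affine.Point

open Rat.AbsoluteValue

def shimuraQuotient : WeierstrassCurve ℚ :=
  { a₁ := 0, a₂ := -19, a₃ := 0, a₄ := 1408, a₆ := -12288 }

namespace shimuraQuotient

instance : shimuraQuotient.IsCharNeTwoNF := ⟨rfl, rfl⟩

lemma hasIntegralCoeffs : shimuraQuotient.HasIntegralCoeffs (padic 2) where
  a₁_le_one := by simp [shimuraQuotient]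
  a₂_le_one := by exact_mod_cast padic_le_one 2 (-19)
  a₃_le_one := by simp [shimuraQuotient]
  a₄_le_one := by exact_mod_cast padic_le_one 2 1408
  a₆_le_one := by exact_mod_cast padic_le_one 2 (-12288)

lemma nonsingular {x y : ℚ} (h : y ^ 2 = x ^ 3 - 19 * x ^ 2 + 1408 * x - 12288) :
    shimuraQuotient.toAffine.Nonsingular x y := by
  refine (shimuraQuotient.toAffine.equation_iff_nonsingular_of_Δ_ne_zero ?_).mp ?_
  · norm_num [shimuraQuotient, WeierstrassCurve.Δ, WeierstrassCurve.b₂, WeierstrassCurve.b₄,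
      WeierstrassCurve.b₆, WeierstrassCurve.b₈]
  · rw [Affine.equation_iff]
    simp only [shimuraQuotient]
    linear_combination h

abbrev P : shimuraQuotient.toAffine.Point := .some 64 512 (nonsingular (by norm_num))

lemma two_nsmul_P : 2 • P = .some 12 60 (nonsingular (by norm_num)) := by
  rw [two_nsmul]
  exact Affine.Point.some_add_some_eq _ (by norm_num [Affine.negY, shimuraQuotient])
    (by norm_num [Affine.slope, Affine.negY, shimuraQuotient])
    (by norm_num [Affine.slope, Affine.addY, Affine.negAddY, Affine.negY, shimuraQuotient])

lemma three_nsmul_P :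
    3 • P = .some (3136 / 169) (-257024 / 2197) (nonsingular (by norm_num)) := by
  rw [succ_nsmul, two_nsmul_P]
  exact Affine.Point.some_add_some_eq _ (by norm_num)
    (by norm_num [Affine.slope, shimuraQuotient])
    (by norm_num [Affine.slope, Affine.addY, Affine.negAddY, Affine.negY, shimuraQuotient])

lemma six_nsmul_P : 6 • P = .some (393181203 / 10647169) (8799713526960 / 34741712447)
    (nonsingular (by norm_num)) := by
  rw [show 6 = 2 * 3 by rfl, mul_nsmul', three_nsmul_P, two_nsmul]
  exact Affine.Point.some_add_some_eq _ (by norm_num [Affine.negY, shimuraQuotient])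
    (by norm_num [Affine.slope, Affine.negY, shimuraQuotient])
    (by norm_num [Affine.slope, Affine.addY, Affine.negAddY, Affine.negY, shimuraQuotient])

lemma twelve_nsmul_P : 12 • P = .some
    (34675422745590244550167846503094801 / 3297852344003410475578279325721600)
    (-7524034267241823083403957958712807915775198634864249 /
      189385537282300636029537391855022619445812596736000)
    (nonsingular (by norm_num)) := by
  rw [show 12 = 2 * 6 by rfl, mul_nsmul', six_nsmul_P, two_nsmul]
  exact Affine.Point.some_add_some_eq _ (by norm_num [Affine.negY, shimuraQuotient])
    (by norm_num [Affine.slope, Affine.negY, shimuraQuotient])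
    (by norm_num [Affine.slope, Affine.addY, Affine.negAddY, Affine.negY, shimuraQuotient])

lemma padic_two : padic 2 2 = 2⁻¹ := by
  exact_mod_cast padic_natCast_self 2

lemma padic_x_twelve_nsmul_P : padic 2
    (34675422745590244550167846503094801 / 3297852344003410475578279325721600 : ℚ) = 2 ^ 10 := by
  rw [show (34675422745590244550167846503094801 / 3297852344003410475578279325721600 : ℚ) =
      ((34675422745590244550167846503094801 : ℤ) : ℚ) /
        (2 ^ 10 * ((3220558929690830542556913404025 : ℤ) : ℚ)) by norm_num,
    map_div₀, map_mul, map_pow, padic_two, padic_intCast_of_not_dvd 2 (by norm_num),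
    padic_intCast_of_not_dvd 2 (by norm_num)]
  norm_num

end shimuraQuotient

open shimuraQuotient in
/-- The elliptic curve `w² = 16s³ - 19s² + 88s - 48` over `ℚ` has the rational
point `(s, w) = (4, 32)`, and this point has infinite order.  (The curve is put
in Weierstrass form via `(x, y) = (16s, 16w)`, giving
`y² = x³ - 19x² + 1408x - 12288`, under which `(4, 32)` corresponds to
`(64, 512)`; infinite order means `addOrderOf` is `0`.) -/
theorem shimura_quotient_point_infinite_order :
    ((32 : ℚ) ^ 2 = 16 * 4 ^ 3 - 19 * 4 ^ 2 + 88 * 4 - 48) ∧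
      (let W : WeierstrassCurve ℚ :=
        { a₁ := 0, a₂ := -19, a₃ := 0, a₄ := 1408, a₆ := -12288 }
       ∃ h : W.toAffine.Nonsingular 64 512,
         addOrderOf (WeierstrassCurve.Affine.Point.some 64 512 h) = 0) := by
  refine ⟨by norm_num, nonsingular (by norm_num), addOrderOf_eq_zero_iff.mpr fun hP => ?_⟩
  have h12 : IsOfFinAddOrder (12 • P) := hP.nsmul
  rw [twelve_nsmul_P] at h12
  exact not_isOfFinAddOrder_some_of_one_lt_abv (isNonarchimedean_padic 2) two_ne_zero
    (by rw [padic_two]; norm_num) hasIntegralCoeffs _ (by rw [padic_x_twelve_nsmul_P]; norm_num) h12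
end
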